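/- arXiv:1605.09721 — 3 statements merged into one kernel-verified Lean document; each statement's English description precedes it below -/
import Mathlib

section
/- Let G be a graph on n vertices with maximum vertex degree Δ, and let 0 < ε < 1. If each vertex is sampled independently with probability p = (1-ε)/Δ, then with high probability (probability at least 1 - 1/n for sufficiently large n) the largest connected component of the induced subgraph on the sampled vertices has size at most (4/ε²)·log n. -/
/-
Explore the component of a sampled vertex `v` with a queue: pop `x`; if `x` is sampled, it joins
the component and its at most `Δ` neighbours are pushed. A component of size `k` therefore needs
`k` successes among the first `1 + (k - 1)Δ` independent coin flips of bias `p = (1 - ε)/Δ`, whose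
mean is at most `(1 - ε)k`. The Chernoff bound makes this at most `(e^ε (1 - ε))^k ≤ e^(-ε²k/2)`,
which is below `n⁻²` once `k > 4 log n / ε²`; a union bound over `v` gives `1/n`.
The coin flip of `x` is revealed by splitting the subsets of the vertex set according to
whether they contain `x`.
-/

open Finset

/-- The subgraph of `G` restricted to edges with both endpoints in `S`. -/
def withinGraph {V : Type*} (G : SimpleGraph V) (S : Finset V) : SimpleGraph V where
  Adj u v := G.Adj u v ∧ u ∈ S ∧ v ∈ S
  symm := by constructor; intro u v h; exact ⟨h.1.symm, h.2.2, h.2.1⟩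
  loopless := by constructor; intro v h; exact G.irrefl h.1

open Classical in
/-- The number of vertices of the largest connected component of the subgraph of `G`
induced by the vertex set `S`. -/
noncomputable def maxCompSize {V : Type*} [Fintype V] (G : SimpleGraph V) (S : Finset V) : ℕ :=
  S.sup fun v => (S.filter fun u => (withinGraph G S).Reachable v u).card

open SimpleGraph

section Exploration
variable {V : Type*} (G : SimpleGraph V)

lemma withinGraph_mono {A B : Finset V} (h : A ⊆ B) : withinGraph G A ≤ withinGraph G B :=
  fun _ _ ha => ⟨ha.1, h ha.2.1, h ha.2.2⟩

variable {G}

lemma mem_of_reachable_withinGraph {A : Finset V} {x u : V}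
    (h : (withinGraph G A).Reachable x u) (hu : u ∈ A) : x ∈ A := by
  obtain ⟨_ | ⟨hxy, _⟩⟩ := h
  exacts [hu, hxy.2.1]

/-- A walk inside `A` from `y` to `u ≠ x` either avoids `x`, or its part after the last visit
to `x` starts at a neighbour of `x`. -/
lemma reachable_withinGraph_erase_or [DecidableEq V] {A : Finset V} {x y u : V} (hu : u ≠ x)
    (h : (withinGraph G A).Reachable y u) :
    (y ≠ x ∧ (withinGraph G (A.erase x)).Reachable y u) ∨
      ∃ z, G.Adj x z ∧ (withinGraph G (A.erase x)).Reachable z u := by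
  obtain ⟨w⟩ := h
  induction w with
  | nil => exact .inl ⟨hu, .refl _⟩
  | @cons y b u hyb _ ih =>
    rcases ih hu with ⟨hb, hbu⟩ | hxu
    · by_cases hy : y = x
      · exact .inr ⟨b, hy ▸ hyb.1, hbu⟩
      · refine .inl ⟨hy, .trans (Adj.reachable ?_) hbu⟩
        exact ⟨hyb.1, mem_erase.mpr ⟨hy, hyb.2.1⟩, mem_erase.mpr ⟨hb, hyb.2.2⟩⟩
    · exact .inr hxu

variable (G)

open Classical in
noncomputable def reachableFrom (q : List V) (A : Finset V) : Finset V :=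
  {u ∈ A | ∃ x ∈ q, (withinGraph G A).Reachable x u}

lemma reachableFrom_subset (q : List V) (A : Finset V) : reachableFrom G q A ⊆ A := by
  classical
  exact filter_subset _ _

@[simp]
lemma reachableFrom_nil (A : Finset V) : reachableFrom G [] A = ∅ := by
  classical
  simp [reachableFrom]

lemma reachableFrom_cons_of_notMem {x : V} {A : Finset V} (hx : x ∉ A) (q : List V) :
    reachableFrom G (x :: q) A = reachableFrom G q A := by
  classical
  refine filter_congr fun u hu => ?_
  simp only [List.mem_cons, exists_eq_or_imp, or_iff_right_iff_imp]
  exact fun hxu => absurd (mem_of_reachable_withinGraph hxu hu) hx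

variable [Fintype V] [DecidableRel G.Adj]

lemma reachableFrom_cons_of_mem [DecidableEq V] {x : V} {A : Finset V} (hx : x ∈ A)
    (q : List V) :
    reachableFrom G (x :: q) A =
      insert x (reachableFrom G (q ++ (G.neighborFinset x).toList) (A.erase x)) := by
  classical
  ext u
  simp only [reachableFrom, mem_insert, mem_filter, List.mem_cons, List.mem_append,
    mem_toList, mem_neighborFinset]
  constructor
  · rintro ⟨huA, y, hy, hyu⟩
    by_cases hux : u = x
    · exact .inl hux
    refine .inr ⟨mem_erase.mpr ⟨hux, huA⟩, ?_⟩
    rcases reachable_withinGraph_erase_or hux hyu with ⟨hyx, hyu'⟩ | ⟨z, hxz, hzu⟩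
    · exact ⟨y, .inl (hy.resolve_left hyx), hyu'⟩
    · exact ⟨z, .inr hxz, hzu⟩
  · have hmono := withinGraph_mono G (erase_subset x A)
    rintro (rfl | ⟨huA, z, hz | hxz, hzu⟩)
    · exact ⟨hx, u, .inl rfl, .refl _⟩
    · exact ⟨mem_of_mem_erase huA, z, .inr hz, hzu.mono hmono⟩
    · have hzA := mem_erase.mp (mem_of_reachable_withinGraph hzu huA)
      exact ⟨mem_of_mem_erase huA, x, .inl rfl,
        (Adj.reachable (G := withinGraph G A) ⟨hxz, hx, hzA.2⟩).trans (hzu.mono hmono)⟩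

lemma card_reachableFrom_cons_of_mem [DecidableEq V] {x : V} {A : Finset V} (hx : x ∈ A)
    (q : List V) :
    #(reachableFrom G (x :: q) A) =
      #(reachableFrom G (q ++ (G.neighborFinset x).toList) (A.erase x)) + 1 := by
  rw [reachableFrom_cons_of_mem G hx, card_insert_of_notMem]
  exact fun hmem => (mem_erase.mp (reachableFrom_subset G _ _ hmem)).1 rfl

end Exploration

section Tail
variable {V : Type*} (G : SimpleGraph V) (p : ℝ)

open Classical in
/-- The probability that at least `j` vertices are reachable from `q` in the subgraph induced by
a `p`-random subset of `D`. -/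
noncomputable def exploreTail (D : Finset V) (q : List V) (j : ℕ) : ℝ :=
  ∑ S ∈ D.powerset with j ≤ #(reachableFrom G q S), p ^ #S * (1 - p) ^ (#D - #S)

lemma exploreTail_zero (D : Finset V) (q : List V) : exploreTail G p D q 0 = 1 := by
  simp [exploreTail, sum_pow_mul_eq_add_pow]

lemma exploreTail_nil (D : Finset V) (j : ℕ) : exploreTail G p D [] (j + 1) = 0 := by
  simp [exploreTail]

lemma exploreTail_cons_of_notMem {D : Finset V} {x : V} (hx : x ∉ D) (q : List V) (j : ℕ) :
    exploreTail G p D (x :: q) j = exploreTail G p D q j := by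
  classical
  refine sum_congr (filter_congr fun S hS => ?_) fun _ _ => rfl
  rw [reachableFrom_cons_of_notMem G (fun hxS => hx (mem_powerset.mp hS hxS))]

lemma exploreTail_cons_of_mem [Fintype V] [DecidableRel G.Adj] [DecidableEq V] {D : Finset V}
    {x : V} (hx : x ∈ D) (q : List V) (j : ℕ) :
    exploreTail G p D (x :: q) (j + 1) =
      (1 - p) * exploreTail G p (D.erase x) q (j + 1) +
        p * exploreTail G p (D.erase x) (q ++ (G.neighborFinset x).toList) j := by
  classical
  set D' := D.erase x
  have hxD' : x ∉ D' := notMem_erase x D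
  simp only [exploreTail, sum_filter, mul_sum]
  rw [← insert_erase hx, sum_powerset_insert hxD', card_insert_of_notMem hxD']
  have hsub : ∀ S ∈ D'.powerset, x ∉ S ∧ #S ≤ #D' := fun S hS =>
    ⟨fun h => hxD' (mem_powerset.mp hS h), card_le_card (mem_powerset.mp hS)⟩
  congr 1 <;> refine sum_congr rfl fun S hS => ?_ <;> obtain ⟨hxS, hSD'⟩ := hsub S hS
  · rw [reachableFrom_cons_of_notMem G hxS, show #D' + 1 - #S = #D' - #S + 1 by omega]
    split_ifs <;> ring
  · rw [card_reachableFrom_cons_of_mem G (mem_insert_self x S), erase_insert hxS,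
      card_insert_of_notMem hxS, Nat.add_sub_add_right]
    simp only [add_le_add_iff_right]
    split_ifs <;> ring

end Tail

section Chernoff
variable {V : Type*} [Fintype V] [DecidableEq V] (G : SimpleGraph V) [DecidableRel G.Adj]
  {p t : ℝ} {Δ : ℕ}

/-- Every explored vertex costs one sampling step and adds at most `Δ` vertices to the queue,
so reaching `j` vertices takes at most `|q| + (j - 1)Δ` trials, each succeeding with
probability `p`. -/
theorem exploreTail_le (hp0 : 0 ≤ p) (hp1 : p ≤ 1) (ht : 1 ≤ t) (hΔ : ∀ x, G.degree x ≤ Δ) :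
    ∀ (D : Finset V) (q : List V) (j : ℕ),
      exploreTail G p D q j ≤ (1 - p + p * t) ^ (q.length + (j - 1) * Δ) / t ^ j
  | D, q, 0 => by
    rw [exploreTail_zero, pow_zero, div_one]
    exact one_le_pow₀ (by nlinarith)
  | D, [], j + 1 => by
    rw [exploreTail_nil]
    have : 0 ≤ 1 - p + p * t := by nlinarith
    positivity
  | D, x :: q, j + 1 => by
    set c := 1 - p + p * t
    have hc : 1 ≤ c := by nlinarith
    have ht0 : 0 < t := by linarith
    simp only [List.length_cons, Nat.add_sub_cancel]
    by_cases hx : x ∈ D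
    · have := card_erase_lt_of_mem hx
      have hstay : exploreTail G p (D.erase x) q (j + 1) ≤
          c ^ (q.length + j * Δ) / t ^ (j + 1) := by
        simpa using exploreTail_le hp0 hp1 ht hΔ (D.erase x) q (j + 1)
      have hgrow : exploreTail G p (D.erase x) (q ++ (G.neighborFinset x).toList) j ≤
          c ^ (q.length + j * Δ) / t ^ j := by
        rcases j with _ | j
        · rw [exploreTail_zero, pow_zero, div_one]
          exact one_le_pow₀ hc
        · refine (exploreTail_le hp0 hp1 ht hΔ _ _ (j + 1)).trans ?_
          gcongr c ^ ?_ / _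
          have := hΔ x
          simp only [List.length_append, length_toList, card_neighborFinset_eq_degree,
            Nat.add_sub_cancel]
          nlinarith
      rw [exploreTail_cons_of_mem G p hx]
      calc (1 - p) * exploreTail G p (D.erase x) q (j + 1) +
            p * exploreTail G p (D.erase x) (q ++ (G.neighborFinset x).toList) j
          ≤ (1 - p) * (c ^ (q.length + j * Δ) / t ^ (j + 1)) +
              p * (c ^ (q.length + j * Δ) / t ^ j) := by
            have : 0 ≤ 1 - p := by linarith
            gcongr
        _ = c ^ (q.length + 1 + j * Δ) / t ^ (j + 1) := by
            rw [add_right_comm, pow_succ]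
            field_simp
            ring
    · rw [exploreTail_cons_of_notMem G p hx]
      refine (exploreTail_le hp0 hp1 ht hΔ D q (j + 1)).trans ?_
      gcongr c ^ ?_ / _
      simp
termination_by D q => (#D, q.length)

end Chernoff

open Real in
lemma exp_mul_one_sub_le_exp_neg_sq_div_two {x : ℝ} (h0 : 0 ≤ x) (h1 : x < 1) :
    exp x * (1 - x) ≤ exp (-(x ^ 2 / 2)) := by
  have hlog : log (1 - x) ≤ -x - x ^ 2 / 2 := by
    have hs := hasSum_pow_div_log_of_abs_lt_one (x := x) (by rwa [abs_of_nonneg h0])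
    have h2 := sum_le_hasSum (range 2) (fun i _ => by positivity) hs
    norm_num [sum_range_succ] at h2
    linarith
  rw [← exp_log (by linarith : 0 < 1 - x), ← exp_add, exp_le_exp]
  linarith

open Real in
theorem exploreTail_singleton_le {V : Type*} [Fintype V] [DecidableEq V] (G : SimpleGraph V)
    [DecidableRel G.Adj] {ε : ℝ} (hε0 : 0 ≤ ε) (hε1 : ε < 1) {Δ : ℕ} (hΔ1 : 1 ≤ Δ)
    (hΔ : ∀ x, G.degree x ≤ Δ) (D : Finset V) (v : V) {k : ℕ} (hk : 1 ≤ k) :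
    exploreTail G ((1 - ε) / Δ) D [v] k ≤ exp (-(ε ^ 2 / 2) * k) := by
  have hΔ0 : (0 : ℝ) < Δ := by exact_mod_cast hΔ1
  have hΔ1' : (1 : ℝ) ≤ Δ := by exact_mod_cast hΔ1
  have hp0 : 0 ≤ (1 - ε) / Δ := div_nonneg (by linarith) hΔ0.le
  have hp1 : (1 - ε) / Δ ≤ 1 := (div_le_one hΔ0).mpr (by linarith)
  have ht : 1 ≤ (1 - ε)⁻¹ := one_le_inv₀ (by linarith) |>.mpr (by linarith)
  -- `t = (1 - ε)⁻¹` is the optimal Chernoff parameter for a mean of at most `(1 - ε) k`.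
  have hc : 1 - (1 - ε) / Δ + (1 - ε) / Δ * (1 - ε)⁻¹ = 1 + ε / Δ := by
    field_simp [(by linarith : 0 < 1 - ε).ne']
    ring
  calc exploreTail G ((1 - ε) / Δ) D [v] k
      ≤ (1 + ε / Δ) ^ (1 + (k - 1) * Δ) / (1 - ε)⁻¹ ^ k := by
        simpa [hc] using exploreTail_le G hp0 hp1 ht hΔ D [v] k
    _ ≤ (1 + ε / Δ) ^ (Δ * k) * (1 - ε) ^ k := by
        rw [inv_pow, div_inv_eq_mul]
        gcongr
        · have : 0 ≤ ε / Δ := by positivity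
          linarith
        · nlinarith [Nat.sub_add_cancel hk]
    _ = ((1 + ε / Δ) ^ Δ * (1 - ε)) ^ k := by rw [pow_mul, mul_pow]
    _ ≤ (exp ε * (1 - ε)) ^ k := by
        have : 0 ≤ 1 - ε := by linarith
        gcongr
        have := one_sub_div_pow_le_exp_neg (n := Δ) (t := -ε) (by linarith)
        rwa [neg_div, sub_neg_eq_add, neg_neg] at this
    _ ≤ exp (-(ε ^ 2 / 2)) ^ k := by
        have : 0 ≤ exp ε * (1 - ε) := mul_nonneg (exp_pos ε).le (by linarith)
        gcongr
        exact exp_mul_one_sub_le_exp_neg_sq_div_two hε0 hε1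
    _ = exp (-(ε ^ 2 / 2) * k) := by rw [← exp_nat_mul, mul_comm]

lemma sum_filter_le_sum_sum_filter {ι α M : Type*} [AddCommMonoid M] [PartialOrder M]
    [IsOrderedAddMonoid M] {s : Finset α} {I : Finset ι} {f : α → M} {P : α → Prop}
    {Q : ι → α → Prop} [DecidablePred P] [∀ i, DecidablePred (Q i)] (hf : ∀ a ∈ s, 0 ≤ f a)
    (hPQ : ∀ a ∈ s, P a → ∃ i ∈ I, Q i a) :
    ∑ a ∈ s with P a, f a ≤ ∑ i ∈ I, ∑ a ∈ s with Q i a, f a := by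
  calc ∑ a ∈ s with P a, f a
      ≤ ∑ a ∈ s with P a, ∑ i ∈ I with Q i a, f a := by
        refine sum_le_sum fun a ha => ?_
        obtain ⟨haS, hPa⟩ := mem_filter.mp ha
        obtain ⟨i, hi, hQ⟩ := hPQ a haS hPa
        exact single_le_sum (f := fun _ => f a) (fun _ _ => hf a haS) (mem_filter.mpr ⟨hi, hQ⟩)
    _ ≤ ∑ a ∈ s, ∑ i ∈ I with Q i a, f a :=
        sum_le_sum_of_subset_of_nonneg (filter_subset _ _)
          fun a ha _ => sum_nonneg fun _ _ => hf a ha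
    _ = ∑ i ∈ I, ∑ a ∈ s with Q i a, f a := by
        simp only [sum_filter]
        exact sum_comm

lemma exists_le_card_reachableFrom_of_le_maxCompSize {V : Type*} [Fintype V]
    {G : SimpleGraph V} {S : Finset V} {k : ℕ} (hk : 0 < k) (h : k ≤ maxCompSize G S) :
    ∃ v, k ≤ #(reachableFrom G [v] S) := by
  classical
  rw [maxCompSize, Finset.le_sup_iff hk] at h
  obtain ⟨v, -, hv⟩ := h
  exact ⟨v, hv.trans_eq (by simp [reachableFrom])⟩

open Classical in
/-- Sampling each vertex of a graph with max degree `Δ` independently with probability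
`(1-ε)/Δ` leaves, with probability at least `1 - 1/n` (for `n` large enough), no connected
component larger than `(4/ε²)·log n`. -/
theorem stmt0 (ε : ℝ) (hε0 : 0 < ε) (hε1 : ε < 1) :
    ∃ N : ℕ, ∀ n : ℕ, N ≤ n → ∀ G : SimpleGraph (Fin n), ∀ _ : DecidableRel G.Adj,
      0 < G.maxDegree →
      (∑ S ∈ (Finset.univ : Finset (Finset (Fin n))).filter
          (fun S => (4 / ε ^ 2) * Real.log n < (maxCompSize G S : ℝ)),
        ((1 - ε) / (G.maxDegree : ℝ)) ^ S.card
          * (1 - (1 - ε) / (G.maxDegree : ℝ)) ^ (n - S.card))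
        ≤ 1 / (n : ℝ) := by
  refine ⟨1, fun n hn G _ hΔ => ?_⟩
  have hn0 : (0 : ℝ) < n := by exact_mod_cast hn
  have hthreshold : 0 ≤ 4 / ε ^ 2 * Real.log n := by
    have := Real.log_nonneg (by exact_mod_cast hn : (1 : ℝ) ≤ n)
    positivity
  set k := ⌊4 / ε ^ 2 * Real.log n⌋₊ + 1
  have hk0 : 0 < k := Nat.succ_pos _
  have hk : 2 * Real.log n ≤ ε ^ 2 / 2 * k := by
    have : 4 / ε ^ 2 * Real.log n ≤ k := by
      simpa [k] using (Nat.lt_floor_add_one (4 / ε ^ 2 * Real.log n)).le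
    calc 2 * Real.log n = ε ^ 2 / 2 * (4 / ε ^ 2 * Real.log n) := by field_simp; ring
      _ ≤ ε ^ 2 / 2 * k := by gcongr
  have hΔR : (1 : ℝ) ≤ G.maxDegree := by exact_mod_cast hΔ
  have hp : (1 - ε) / G.maxDegree ≤ 1 := div_le_one_of_le₀ (by linarith) (by positivity)
  calc _ ≤ ∑ v, exploreTail G ((1 - ε) / G.maxDegree) univ [v] k := by
        simp only [exploreTail, powerset_univ, card_univ, Fintype.card_fin]
        refine sum_filter_le_sum_sum_filter
          (fun S _ => mul_nonneg (by positivity) (pow_nonneg (sub_nonneg.mpr hp) _))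
          fun S _ hS => ?_
        obtain ⟨v, hv⟩ := exists_le_card_reachableFrom_of_le_maxCompSize hk0
          (Nat.floor_lt hthreshold |>.mpr hS)
        exact ⟨v, mem_univ v, hv⟩
    _ ≤ ∑ _v : Fin n, Real.exp (-(2 * Real.log n)) := by
        gcongr with v
        refine (exploreTail_singleton_le G hε0.le hε1 hΔ G.degree_le_maxDegree _ v
          hk0).trans ?_
        gcongr
        linarith
    _ = 1 / n := by
        rw [sum_const, card_univ, Fintype.card_fin, nsmul_eq_mul, Real.exp_neg, two_mul,
          Real.exp_add, Real.exp_log hn0]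
        field_simp
end

section
/- Let f : {0,1}^n → ℝ be a monotone function. Let Y be the indicator vector of a uniformly random B-subset of {1,…,n} (sampling B items without replacement), and let Z be the indicator vector of the set obtained by drawing B items uniformly with replacement (so Z has at most B ones). Then for any threshold C, P(f(Z) > C) ≤ P(f(Y) > C). -/
/-!
Group the maps `g : Fin B → Fin n` by their image `S`. The number of `g` with image `S` depends
only on `#S` (permutations of `Fin n` act transitively on each level) and vanishes for `#S > B`,
so sampling with replacement is a mixture of the uniform distributions on the levels `b ≤ B`.
For an upper family `𝒜`, such as `{S | C < f S}`, the density `#(𝒜 # b) / C(n, b)` is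
nondecreasing in `b`: double count the pairs `S ⊆ T` with `S ∈ 𝒜 # b` and `T ∈ 𝒜 # B`, noting
that each such `S` has at least `C(n - b, B - b)` partners and each such `T` at most `C(B, b)`.
-/

open Finset

section UpperSet

variable {α : Type*}

theorem card_slice_univ [Fintype α] (r : ℕ) :
    #((univ : Finset (Finset α)) # r) = (Fintype.card α).choose r := by
  rw [← card_univ, ← card_powersetCard]
  congr 1
  ext S
  simp [mem_slice]

theorem card_filter_subset_slice_le [DecidableEq α] (𝒜 : Finset (Finset α)) (b : ℕ)
    (T : Finset α) : #{S ∈ 𝒜 # b | S ⊆ T} ≤ (#T).choose b := by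
  rw [← card_powersetCard]
  refine card_le_card fun S hS => ?_
  obtain ⟨hS, hST⟩ := mem_filter.1 hS
  exact mem_powersetCard.2 ⟨hST, (mem_slice.1 hS).2⟩

variable [Fintype α] [DecidableEq α] {𝒜 : Finset (Finset α)}

theorem IsUpperSet.choose_le_card_supersets_mem_slice (h𝒜 : IsUpperSet (𝒜 : Set (Finset α)))
    {S : Finset α} (hS : S ∈ 𝒜) {B : ℕ} (hSB : #S ≤ B) :
    (Fintype.card α - #S).choose (B - #S) ≤ #{T ∈ 𝒜 # B | S ⊆ T} := by
  rw [← card_compl, ← card_powersetCard]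
  have hdisj : ∀ U ∈ powersetCard (B - #S) Sᶜ, Disjoint U S := fun U hU =>
    subset_compl_iff_disjoint_right.1 (mem_powersetCard.1 hU).1
  refine card_le_card_of_injOn (· ∪ S) (fun U hU => ?_) (fun U₁ hU₁ U₂ hU₂ h => ?_)
  · simp only [coe_filter, Set.mem_ofPred_eq, mem_slice]
    refine ⟨⟨h𝒜 subset_union_right hS, ?_⟩, subset_union_right⟩
    rw [card_union_of_disjoint (hdisj U hU), (mem_powersetCard.1 hU).2]
    omega
  · rw [← union_sdiff_cancel_right (hdisj U₁ hU₁), ← union_sdiff_cancel_right (hdisj U₂ hU₂)]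
    exact congrArg (· \ S) h

theorem IsUpperSet.card_slice_mul_choose_le (h𝒜 : IsUpperSet (𝒜 : Set (Finset α)))
    {b B : ℕ} (hbB : b ≤ B) :
    #(𝒜 # b) * (Fintype.card α).choose B ≤ #(𝒜 # B) * (Fintype.card α).choose b := by
  have hcount : #(𝒜 # b) * (Fintype.card α - b).choose (B - b) ≤ #(𝒜 # B) * B.choose b := by
    refine card_mul_le_card_mul (· ⊆ ·) (fun S hS => ?_) (fun T hT => ?_)
    · obtain ⟨hS𝒜, rfl⟩ := mem_slice.1 hS
      exact h𝒜.choose_le_card_supersets_mem_slice hS𝒜 hbB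
    · obtain ⟨-, rfl⟩ := mem_slice.1 hT
      exact card_filter_subset_slice_le 𝒜 b T
  refine Nat.le_of_mul_le_mul_right ?_ (Nat.choose_pos hbB)
  calc #(𝒜 # b) * (Fintype.card α).choose B * B.choose b
      = #(𝒜 # b) * (Fintype.card α - b).choose (B - b) * (Fintype.card α).choose b := by
        rw [mul_assoc, Nat.choose_mul hbB, mul_comm ((Fintype.card α).choose b), mul_assoc]
    _ ≤ #(𝒜 # B) * B.choose b * (Fintype.card α).choose b := by gcongr
    _ = #(𝒜 # B) * (Fintype.card α).choose b * B.choose b := by ring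

theorem IsUpperSet.sum_slice_mul_choose_le (h𝒜 : IsUpperSet (𝒜 : Set (Finset α)))
    {B : ℕ} {w : Finset α → ℕ} (hw : ∀ S T, #S = #T → w S = w T)
    (hw₀ : ∀ S, B < #S → w S = 0) (r : ℕ) :
    (∑ S ∈ 𝒜 # r, w S) * (Fintype.card α).choose B ≤ #(𝒜 # B) * ∑ S ∈ univ # r, w S := by
  obtain h | ⟨S₀, hS₀⟩ := (𝒜 # r).eq_empty_or_nonempty
  · simp [h]
  have hr : #S₀ = r := (mem_slice.1 hS₀).2
  have hconst (𝒮 : Finset (Finset α)) : ∑ S ∈ 𝒮 # r, w S = #(𝒮 # r) * w S₀ :=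
    sum_const_nat fun S hS => hw S S₀ ((mem_slice.1 hS).2.trans hr.symm)
  rw [hconst, hconst, card_slice_univ]
  rcases le_or_gt r B with hrB | hBr
  · calc #(𝒜 # r) * w S₀ * (Fintype.card α).choose B
        = #(𝒜 # r) * (Fintype.card α).choose B * w S₀ := by ring
      _ ≤ #(𝒜 # B) * (Fintype.card α).choose r * w S₀ :=
        Nat.mul_le_mul_right _ (h𝒜.card_slice_mul_choose_le hrB)
      _ = #(𝒜 # B) * ((Fintype.card α).choose r * w S₀) := by ring
  · simp [hw₀ S₀ (hr ▸ hBr)]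

theorem IsUpperSet.sum_mul_choose_le (h𝒜 : IsUpperSet (𝒜 : Set (Finset α)))
    {B : ℕ} {w : Finset α → ℕ} (hw : ∀ S T, #S = #T → w S = w T)
    (hw₀ : ∀ S, B < #S → w S = 0) :
    (∑ S ∈ 𝒜, w S) * (Fintype.card α).choose B ≤ #(𝒜 # B) * ∑ S, w S := by
  have hslices (𝒮 : Finset (Finset α)) :
      ∑ r ∈ Iic (Fintype.card α), ∑ S ∈ 𝒮 # r, w S = ∑ S ∈ 𝒮, w S :=
    sum_fiberwise_of_maps_to (fun S _ => mem_Iic.2 S.card_le_univ) w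
  rw [← hslices 𝒜, ← hslices univ, sum_mul, mul_sum]
  exact sum_le_sum fun r _ => h𝒜.sum_slice_mul_choose_le hw hw₀ r

end UpperSet

section Fibers

open Equiv Pointwise

variable {α β : Type*} [Fintype α] [DecidableEq α] [Fintype β] [DecidableEq β]

theorem card_filter_image_univ_eq_perm_smul (σ : Perm α) (S : Finset α) :
    #{g : β → α | image g univ = σ • S} = #{g : β → α | image g univ = S} := by
  refine card_nbij' (σ.symm ∘ ·) (σ ∘ ·) (fun g hg => ?_) (fun g hg => ?_)
    (fun g _ => funext fun _ => σ.apply_symm_apply _)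
    (fun g _ => funext fun _ => σ.symm_apply_apply _)
  · simp only [coe_filter, mem_univ, true_and, Set.mem_ofPred_eq] at hg ⊢
    rw [← image_image, hg, smul_finset_def, image_image]
    simp [Perm.smul_def]
  · simp only [coe_filter, mem_univ, true_and, Set.mem_ofPred_eq] at hg ⊢
    rw [← image_image, hg, smul_finset_def]
    rfl

theorem card_filter_image_univ_eq_of_card_eq {S T : Finset α} (h : #S = #T) :
    #{g : β → α | image g univ = S} = #{g : β → α | image g univ = T} := by
  have := Set.powersetCard.isPretransitive (α := α) (n := #S)
  obtain ⟨σ, hσ⟩ := MulAction.exists_smul_eq (Perm α)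
    (⟨S, rfl⟩ : Set.powersetCard α #S) ⟨T, Set.powersetCard.mem_iff.2 h.symm⟩
  have hσT : σ • S = T := by
    simpa only [Set.powersetCard.coe_smul] using congrArg Subtype.val hσ
  rw [← hσT, card_filter_image_univ_eq_perm_smul]

theorem card_filter_image_univ_eq_eq_zero {S : Finset α} (h : Fintype.card β < #S) :
    #{g : β → α | image g univ = S} = 0 := by
  refine card_eq_zero.2 (filter_eq_empty_iff.2 fun g _ hg => ?_)
  have := card_image_le (s := univ) (f := g)
  rw [hg, card_univ] at this
  omega

end Fibers

open Classical in
theorem stmt4_general (n : ℕ) (B : ℕ) (hB : B ≤ n)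
    (f : Finset (Fin n) → ℝ) (hf : ∀ S T : Finset (Fin n), S ⊆ T → f S ≤ f T)
    (C : ℝ) :
    (((Finset.univ : Finset (Fin B → Fin n)).filter
        (fun g => C < f (Finset.image g Finset.univ))).card : ℝ) / (n : ℝ) ^ B
      ≤ (((Finset.univ : Finset (Finset (Fin n))).filter
        (fun S => S.card = B ∧ C < f S)).card : ℝ) / (n.choose B : ℝ) := by
  set 𝒜 : Finset (Finset (Fin n)) := {S | C < f S}
  have h𝒜 : IsUpperSet (𝒜 : Set (Finset (Fin n))) := fun S T hST hS => by
    simp only [𝒜, coe_filter, mem_univ, true_and, Set.mem_ofPred_eq] at hS ⊢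
    exact hS.trans_le (hf S T hST)
  have hcount := h𝒜.sum_mul_choose_le (B := B)
    (w := fun S => #{g : Fin B → Fin n | image g univ = S})
    (fun _ _ => card_filter_image_univ_eq_of_card_eq)
    (fun _ h => card_filter_image_univ_eq_eq_zero (by rwa [Fintype.card_fin]))
  rw [sum_card_fiberwise_eq_card_filter, sum_card_fiberwise_eq_card_filter] at hcount
  simp only [𝒜, slice, mem_filter, mem_univ, true_and, filter_filter, and_comm, filter_true,
    card_univ, Fintype.card_pi, Fintype.card_fin, prod_const] at hcount
  have hchoose : 0 < n.choose B := Nat.choose_pos hB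
  have hpow : 0 < n ^ B := hchoose.trans_le (Nat.choose_le_pow n B)
  rw [div_le_div_iff₀ (by exact_mod_cast hpow) (by exact_mod_cast hchoose)]
  exact_mod_cast hcount

open Classical in
/-- Monotone functions: with-replacement sampling is stochastically dominated by
without-replacement sampling.  `Z` is the indicator of the set of `B` uniform draws with
replacement, and `Y` the indicator of a uniform `B`-subset; then
`P(f(Z) > C) ≤ P(f(Y) > C)`.  Vectors in `{0,1}ⁿ` are represented by the subsets of
coordinates equal to `1`. -/
theorem stmt4 (n : ℕ) (hn : 0 < n) (B : ℕ) (hB : B ≤ n)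
    (f : Finset (Fin n) → ℝ) (hf : ∀ S T : Finset (Fin n), S ⊆ T → f S ≤ f T)
    (C : ℝ) :
    (((Finset.univ : Finset (Fin B → Fin n)).filter
        (fun g => C < f (Finset.image g Finset.univ))).card : ℝ) / (n : ℝ) ^ B
      ≤ (((Finset.univ : Finset (Finset (Fin n))).filter
        (fun S => S.card = B ∧ C < f S)).card : ℝ) / (n.choose B : ℝ) :=
  stmt4_general n B hB f hf C
end

section
/- Serial equivalence across conflict groups: let updates be partitioned into groups C₁,…,C_m such that updates in different groups have disjoint variable supports. Then executing, for each group independently, its updates in the order of a fixed global permutation π produces the same final model as executing all updates serially in the order π. -/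
/-- A stochastic update `u` is local to the coordinate set `S` if it writes only
coordinates in `S` and what it writes depends only on the coordinates in `S`. -/
def IsLocal {d : ℕ} {α : Type*} (S : Set (Fin d)) (u : (Fin d → α) → (Fin d → α)) : Prop :=
  (∀ x : Fin d → α, ∀ j : Fin d, j ∉ S → u x j = x j) ∧
  (∀ x y : Fin d → α, (∀ j ∈ S, x j = y j) → ∀ j ∈ S, u x j = u y j)

/-- Serial equivalence across conflict groups: if the updates are partitioned into groups
`g` with pairwise disjoint supports across distinct groups, and an interleaved execution
order `L` agrees with the serial order `order` within each group, then executing the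
updates along `L` produces the same final model as the serial execution along `order`. -/
theorem stmt19 {d m : ℕ} {α : Type*}
    (S : Fin m → Set (Fin d)) (u : Fin m → ((Fin d → α) → (Fin d → α)))
    (hloc : ∀ i, IsLocal (S i) (u i))
    {k : ℕ} (g : Fin m → Fin k)
    (hdisj : ∀ i j : Fin m, g i ≠ g j → Disjoint (S i) (S j))
    (order : List (Fin m)) (horder : order.Nodup) (hall : ∀ i : Fin m, i ∈ order)
    (L : List (Fin m))
    (hgroup : ∀ a : Fin k,
      L.filter (fun i => decide (g i = a)) = order.filter (fun i => decide (g i = a)))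
    (x : Fin d → α) :
    L.foldl (fun y i => u i y) x = order.foldl (fun y i => u i y) x := by
  have key : ∀ (a : Fin k) (L' : List (Fin m)) (x y : Fin d → α),
      (∀ j, (∃ i, g i = a ∧ j ∈ S i) → x j = y j) →
      ∀ j, (∃ i, g i = a ∧ j ∈ S i) →
        L'.foldl (fun y i => u i y) x j
          = (L'.filter (fun i => decide (g i = a))).foldl (fun y i => u i y) y j := by
    intro a L'
    induction L' with
    | nil => intro x y hxy j hj; simpa using hxy j hj
    | cons i L' ih =>
      intro x y hxy j hj
      by_cases hga : g i = a
      · have hf : (i :: L').filter (fun i => decide (g i = a))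
            = i :: L'.filter (fun i => decide (g i = a)) := by
          simp [List.filter, hga]
        rw [hf]
        simp only [List.foldl_cons]
        apply ih _ _ _ j hj
        intro j' hj'
        obtain ⟨i', hi', hji'⟩ := hj'
        by_cases hjs : j' ∈ S i
        · exact (hloc i).2 x y (fun t ht => hxy t ⟨i, hga, ht⟩) j' hjs
        · rw [(hloc i).1 x j' hjs, (hloc i).1 y j' hjs]
          exact hxy j' ⟨i', hi', hji'⟩
      · have hf : (i :: L').filter (fun i => decide (g i = a))
            = L'.filter (fun i => decide (g i = a)) := by
          simp [List.filter, hga]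
        rw [hf]
        simp only [List.foldl_cons]
        apply ih _ _ _ j hj
        intro j' hj'
        obtain ⟨i', hi', hji'⟩ := hj'
        have hjs : j' ∉ S i := by
          intro h
          exact Set.disjoint_left.mp
            (hdisj i i' (by rw [hi']; exact hga)) h hji'
        rw [(hloc i).1 x j' hjs]
        exact hxy j' ⟨i', hi', hji'⟩
  funext j
  by_cases hj : ∃ i, j ∈ S i
  · obtain ⟨i0, hi0⟩ := hj
    have h1 := key (g i0) L x x (fun _ _ => rfl) j ⟨i0, rfl, hi0⟩
    have h2 := key (g i0) order x x (fun _ _ => rfl) j ⟨i0, rfl, hi0⟩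
    rw [h1, h2, hgroup (g i0)]
  · push_neg at hj
    have fix : ∀ (L' : List (Fin m)) (x : Fin d → α),
        L'.foldl (fun y i => u i y) x j = x j := by
      intro L'
      induction L' with
      | nil => intro x; rfl
      | cons i L' ih =>
        intro x
        simp only [List.foldl_cons]
        rw [ih, (hloc i).1 x j (hj i)]
    rw [fix, fix]
end
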